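/- Let p_1, …, p_n ∈ ℝ² with n ≥ 1 and let y ∈ ℝ. Then the maximum of δ_{p_i p_j}(y) over all backward pairs (i, j) (i.e., pairs with i ≤ j and x_{p_j} ≤ x_{p_i}) equals the maximum of δ'_{p_i p_j}(y) over all pairs (i, j) with i ≤ j: max{ δ_{p_i p_j}(y) : i ≤ j, x_{p_j} ≤ x_{p_i} } = max{ δ'_{p_i p_j}(y) : i ≤ j }. (Both maxima range over nonempty sets since every pair (i, i) is a backward pair.) -/

import Mathlib

open Metric Set

noncomputable section

/-- Points of the Euclidean plane ℝ². -/
abbrev Pt : Type := EuclideanSpace ℝ (Fin 2)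

/-- The point (x, y) ∈ ℝ². -/
def pt (x y : ℝ) : Pt := (WithLp.equiv 2 (Fin 2 → ℝ)).symm ![x, y]

/-- The leftward horizontal halfline ←p = {(x, y_p) : x ≤ x_p}. -/
def leftRay (p : Pt) : Set Pt := {z : Pt | z 1 = p 1 ∧ z 0 ≤ p 0}

/-- The rightward horizontal halfline →p = {(x, y_p) : x ≥ x_p}. -/
def rightRay (p : Pt) : Set Pt := {z : Pt | z 1 = p 1 ∧ p 0 ≤ z 0}

/-- h_{←p}(q): Euclidean distance from q to the leftward halfline at p. -/
def hL (p q : Pt) : ℝ := infDist q (leftRay p)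

/-- h_{→p}(q): Euclidean distance from q to the rightward halfline at p. -/
def hR (p q : Pt) : ℝ := infDist q (rightRay p)

/-- h_{←S}(q) = max_{p ∈ S} h_{←p}(q). -/
def hLS (S : Finset Pt) (hS : S.Nonempty) (q : Pt) : ℝ := S.sup' hS fun p => hL p q

/-- h_{→S}(q) = max_{p ∈ S} h_{→p}(q). -/
def hRS (S : Finset Pt) (hS : S.Nonempty) (q : Pt) : ℝ := S.sup' hS fun p => hR p q

/-- δ_{pq}(y) = inf_x max{‖(x,y) − p‖, ‖(x,y) − q‖}. -/
def delta (p q : Pt) (y : ℝ) : ℝ := ⨅ x : ℝ, max ‖pt x y - p‖ ‖pt x y - q‖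

/-- δ'_{pq}(y) = inf_x max{h_{←q}((x,y)), h_{→p}((x,y))}. -/
def delta' (p q : Pt) (y : ℝ) : ℝ := ⨅ x : ℝ, max (hL q (pt x y)) (hR p (pt x y))

/-!
Since `h_{←q} ≤ ‖· - q‖` and `h_{→p} ≤ ‖· - p‖`, always `δ' ≤ δ`. For a backward pair
(`x_q ≤ x_p`), clamping `x` into `[x_q, x_p]` gives a point whose distances to `q` and `p` are at most
`h_{←q}` and `h_{→p}` at `(x, y)`, so `δ = δ'`. For a forward pair both halflines are reached
vertically from `(x_p, y)`, so `δ'_{pq}(y) ≤ max (|y - y_p|) (|y - y_q|) = max (δ_{pp}(y)) (δ_{qq}(y))`,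
and the diagonal pairs are backward.
-/

lemma dist_le_dist_of_forall_dist_apply_le {𝕜 ι : Type*} [RCLike 𝕜] [Fintype ι]
    {z w z' w' : EuclideanSpace 𝕜 ι} (h : ∀ i, dist (z i) (w i) ≤ dist (z' i) (w' i)) :
    dist z w ≤ dist z' w' := by
  rw [EuclideanSpace.dist_eq, EuclideanSpace.dist_eq]
  gcongr with i
  exact h i

lemma dist_eq_abs_of_fst_eq {z w : Pt} (h : z 0 = w 0) : dist z w = |z 1 - w 1| := by
  simp [EuclideanSpace.dist_eq, Fin.sum_univ_two, h, Real.dist_eq, Real.sqrt_sq_eq_abs]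

lemma abs_sub_snd_le_dist (z w : Pt) : |z 1 - w 1| ≤ dist z w :=
  PiLp.dist_apply_le z w 1

@[simp] lemma pt_fst (x y : ℝ) : pt x y 0 = x := rfl
@[simp] lemma pt_snd (x y : ℝ) : pt x y 1 = y := rfl

lemma self_mem_leftRay (q : Pt) : q ∈ leftRay q := ⟨rfl, le_rfl⟩
lemma self_mem_rightRay (p : Pt) : p ∈ rightRay p := ⟨rfl, le_rfl⟩

lemma hL_le_dist (q z : Pt) : hL q z ≤ dist z q := infDist_le_dist_of_mem (self_mem_leftRay q)
lemma hR_le_dist (p z : Pt) : hR p z ≤ dist z p := infDist_le_dist_of_mem (self_mem_rightRay p)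

lemma hL_le_abs {q z : Pt} (h : z 0 ≤ q 0) : hL q z ≤ |z 1 - q 1| := by
  calc hL q z ≤ dist z (pt (z 0) (q 1)) := infDist_le_dist_of_mem ⟨rfl, h⟩
    _ = |z 1 - q 1| := dist_eq_abs_of_fst_eq rfl

lemma hR_le_abs {p z : Pt} (h : p 0 ≤ z 0) : hR p z ≤ |z 1 - p 1| := by
  calc hR p z ≤ dist z (pt (z 0) (p 1)) := infDist_le_dist_of_mem ⟨rfl, h⟩
    _ = |z 1 - p 1| := dist_eq_abs_of_fst_eq rfl

lemma dist_le_hL {q : Pt} {x x' y : ℝ} (hx' : x' ∈ Icc (q 0) (max x (q 0))) :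
    dist (pt x' y) q ≤ hL q (pt x y) := by
  refine (le_infDist ⟨q, self_mem_leftRay q⟩).2 fun w ⟨hw1, hw0⟩ => ?_
  refine dist_le_dist_of_forall_dist_apply_le fun i => ?_
  fin_cases i
  · simp only [Real.dist_eq]
    calc |x' - q 0| = x' - q 0 := abs_of_nonneg (sub_nonneg.2 hx'.1)
      _ ≤ max x (q 0) - q 0 := by linarith [hx'.2]
      _ = max (x - q 0) 0 := by rw [← max_sub_sub_right, sub_self]
      _ ≤ max (x - w 0) 0 := by gcongr
      _ ≤ |x - w 0| := max_le (le_abs_self _) (abs_nonneg _)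
  · simp [hw1]

lemma dist_le_hR {p : Pt} {x x' y : ℝ} (hx' : x' ∈ Icc (min x (p 0)) (p 0)) :
    dist (pt x' y) p ≤ hR p (pt x y) := by
  refine (le_infDist ⟨p, self_mem_rightRay p⟩).2 fun w ⟨hw1, hw0⟩ => ?_
  refine dist_le_dist_of_forall_dist_apply_le fun i => ?_
  fin_cases i
  · simp only [Real.dist_eq]
    calc |x' - p 0| = p 0 - x' := abs_sub_comm x' (p 0) ▸ abs_of_nonneg (sub_nonneg.2 hx'.2)
      _ ≤ p 0 - min x (p 0) := by linarith [hx'.1]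
      _ = max (p 0 - x) 0 := by rw [← max_sub_sub_left, sub_self]
      _ ≤ max (w 0 - x) 0 := by gcongr
      _ ≤ |x - w 0| := max_le (abs_sub_comm x (w 0) ▸ le_abs_self _) (abs_nonneg _)
  · simp [hw1]

lemma bddBelow_range_of_nonneg {ι : Type*} {f : ι → ℝ} (hf : ∀ i, 0 ≤ f i) :
    BddBelow (range f) :=
  ⟨0, forall_mem_range.2 hf⟩

lemma delta_le (p q : Pt) (x y : ℝ) : delta p q y ≤ max (dist (pt x y) p) (dist (pt x y) q) := by
  simp only [dist_eq_norm]
  exact ciInf_le (bddBelow_range_of_nonneg fun _ => le_max_of_le_left (norm_nonneg _)) x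

lemma delta'_le (p q : Pt) (x y : ℝ) : delta' p q y ≤ max (hL q (pt x y)) (hR p (pt x y)) :=
  ciInf_le (bddBelow_range_of_nonneg fun _ => le_max_of_le_left infDist_nonneg) x

lemma delta'_le_delta (p q : Pt) (y : ℝ) : delta' p q y ≤ delta p q y :=
  ciInf_mono (bddBelow_range_of_nonneg fun _ => le_max_of_le_left infDist_nonneg) fun x => by
    simp only [← dist_eq_norm]
    exact max_le (le_max_of_le_right (hL_le_dist q _)) (le_max_of_le_left (hR_le_dist p _))

lemma delta_self (q : Pt) (y : ℝ) : delta q q y = |y - q 1| := by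
  refine le_antisymm ?_ (le_ciInf fun x => ?_)
  · exact (delta_le q q (q 0) y).trans_eq
      (by rw [max_self, dist_eq_abs_of_fst_eq (pt_fst _ _), pt_snd])
  · simpa [← dist_eq_norm] using abs_sub_snd_le_dist (pt x y) q

lemma delta_eq_delta'_of_backward {p q : Pt} (h : q 0 ≤ p 0) (y : ℝ) :
    delta p q y = delta' p q y := by
  refine le_antisymm (le_ciInf fun x => ?_) (delta'_le_delta p q y)
  set x' := max (q 0) (min x (p 0))
  calc delta p q y ≤ max (dist (pt x' y) p) (dist (pt x' y) q) := delta_le p q x' y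
    _ ≤ max (hL q (pt x y)) (hR p (pt x y)) := by
      rw [max_comm (hL _ _)]
      gcongr
      · exact dist_le_hR ⟨le_max_right _ _, max_le h (min_le_right _ _)⟩
      · exact dist_le_hL ⟨le_max_left _ _,
          max_le (le_max_right _ _) ((min_le_left _ _).trans (le_max_left _ _))⟩

lemma delta'_le_of_forward {p q : Pt} (h : p 0 ≤ q 0) (y : ℝ) :
    delta' p q y ≤ max (delta p p y) (delta q q y) := by
  rw [delta_self, delta_self, max_comm]
  calc delta' p q y ≤ max (hL q (pt (p 0) y)) (hR p (pt (p 0) y)) := delta'_le p q (p 0) y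
    _ ≤ max |y - q 1| |y - p 1| := by
      gcongr
      · exact hL_le_abs h
      · exact hR_le_abs le_rfl

theorem stmt_8 (n : ℕ) (hn : 1 ≤ n) (p : Fin n → Pt) (y : ℝ) :
    (Finset.univ.filter
        (fun ij : Fin n × Fin n => ij.1 ≤ ij.2 ∧ (p ij.2) 0 ≤ (p ij.1) 0)).sup'
      ⟨(⟨0, hn⟩, ⟨0, hn⟩), by simp⟩
      (fun ij => delta (p ij.1) (p ij.2) y)
    =
    (Finset.univ.filter (fun ij : Fin n × Fin n => ij.1 ≤ ij.2)).sup'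
      ⟨(⟨0, hn⟩, ⟨0, hn⟩), by simp⟩
      (fun ij => delta' (p ij.1) (p ij.2) y) := by
  set backwardPairs := Finset.univ.filter
    (fun ij : Fin n × Fin n => ij.1 ≤ ij.2 ∧ (p ij.2) 0 ≤ (p ij.1) 0)
  set δ := fun ij : Fin n × Fin n => delta (p ij.1) (p ij.2) y
  set δ' := fun ij : Fin n × Fin n => delta' (p ij.1) (p ij.2) y
  have le_lhs {i j : Fin n} (hij : i ≤ j) (backward : p j 0 ≤ p i 0) :
      delta (p i) (p j) y ≤ backwardPairs.sup' ⟨(⟨0, hn⟩, ⟨0, hn⟩), by simp [backwardPairs]⟩ δ :=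
    Finset.le_sup' δ (b := (i, j)) (by simp [backwardPairs, hij, backward])
  refine le_antisymm (Finset.sup'_le _ _ fun ij hij => ?_) (Finset.sup'_le _ _ fun ij hij => ?_)
  · simp only [Finset.mem_filter, Finset.mem_univ, true_and] at hij
    exact (delta_eq_delta'_of_backward hij.2 y).trans_le (Finset.le_sup' δ' (by simpa using hij.1))
  · simp only [Finset.mem_filter, Finset.mem_univ, true_and] at hij
    rcases le_total (p ij.2 0) (p ij.1 0) with backward | forward
    · exact (delta'_le_delta _ _ y).trans (le_lhs hij backward)
    · exact (delta'_le_of_forward forward y).trans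
        (max_le (le_lhs le_rfl le_rfl) (le_lhs le_rfl le_rfl))
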